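/- In the inverse braid monoid IBₙ, the Garside fundamental element Δ = (σ₁⋯σₙ₋₁)(σ₁⋯σₙ₋₂)⋯(σ₁σ₂)σ₁ satisfies εᵢΔ = Δεₙ₊₁₋ᵢ for every i with 1 ≤ i ≤ n. -/

import Mathlib

/-!
STATEMENT 17: In the inverse braid monoid IBₙ, the Garside fundamental
element Δ = (σ₁⋯σₙ₋₁)(σ₁⋯σₙ₋₂)⋯(σ₁σ₂)σ₁ satisfies εᵢΔ = Δεₙ₊₁₋ᵢ for every
1 ≤ i ≤ n.
-/
open FreeMonoid

/-- Generators of the inverse braid monoid `IBₙ`: `σᵢ`, `σᵢ⁻¹`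
(index `i : Fin (n-1)` stands for subscript `i+1`) and `ε₁, …, εₙ`
(as `eps j`, `j : Fin n`, `j` standing for `ε_{j+1}`). -/
inductive IBGen (n : ℕ) : Type
  | sig (i : Fin (n - 1)) : IBGen n
  | sinv (i : Fin (n - 1)) : IBGen n
  | eps (j : Fin n) : IBGen n

open IBGen in
/-- The defining relations of the inverse braid monoid `IBₙ`. -/
inductive ibRel (n : ℕ) : FreeMonoid (IBGen n) → FreeMonoid (IBGen n) → Prop
  | braid_comm (i j : Fin (n - 1)) (h : i.val + 1 < j.val ∨ j.val + 1 < i.val) :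
      ibRel n (of (sig i) * of (sig j)) (of (sig j) * of (sig i))
  | braid (i j : Fin (n - 1)) (h : j.val = i.val + 1) :
      ibRel n (of (sig i) * of (sig j) * of (sig i))
              (of (sig j) * of (sig i) * of (sig j))
  | inv_right (i : Fin (n - 1)) : ibRel n (of (sig i) * of (sinv i)) 1
  | inv_left (i : Fin (n - 1)) : ibRel n (of (sinv i) * of (sig i)) 1
  | eps_comm (j : Fin n) (i : Fin (n - 1))
      (h : j.val ≠ i.val ∧ j.val ≠ i.val + 1) :
      ibRel n (of (eps j) * of (sig i)) (of (sig i) * of (eps j))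
  | eps_shift₁ (i : Fin (n - 1)) :
      ibRel n (of (eps ⟨i.val, by have := i.isLt; omega⟩) * of (sig i))
              (of (sig i) * of (eps ⟨i.val + 1, by have := i.isLt; omega⟩))
  | eps_shift₂ (i : Fin (n - 1)) :
      ibRel n (of (eps ⟨i.val + 1, by have := i.isLt; omega⟩) * of (sig i))
              (of (sig i) * of (eps ⟨i.val, by have := i.isLt; omega⟩))
  | idem (j : Fin n) : ibRel n (of (eps j)) (of (eps j) * of (eps j))
  | eps_sq₁ (i : Fin (n - 1)) :
      ibRel n (of (eps ⟨i.val + 1, by have := i.isLt; omega⟩) * of (sig i) * of (sig i))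
              (of (eps ⟨i.val + 1, by have := i.isLt; omega⟩))
  | eps_sq₂ (i : Fin (n - 1)) :
      ibRel n (of (sig i) * of (sig i) * of (eps ⟨i.val + 1, by have := i.isLt; omega⟩))
              (of (eps ⟨i.val + 1, by have := i.isLt; omega⟩))
  | eps_pair₁ (i : Fin (n - 1)) :
      ibRel n (of (eps ⟨i.val, by have := i.isLt; omega⟩) *
               of (eps ⟨i.val + 1, by have := i.isLt; omega⟩) * of (sig i))
              (of (sig i) * of (eps ⟨i.val, by have := i.isLt; omega⟩) *
               of (eps ⟨i.val + 1, by have := i.isLt; omega⟩))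
  | eps_pair₂ (i : Fin (n - 1)) :
      ibRel n (of (eps ⟨i.val, by have := i.isLt; omega⟩) *
               of (eps ⟨i.val + 1, by have := i.isLt; omega⟩) * of (sig i))
              (of (eps ⟨i.val, by have := i.isLt; omega⟩) *
               of (eps ⟨i.val + 1, by have := i.isLt; omega⟩))

/-- The inverse braid monoid `IBₙ`. -/
def InvBraidMonoid (n : ℕ) : Type := PresentedMonoid (ibRel n)

instance (n : ℕ) : Monoid (InvBraidMonoid n) :=
  inferInstanceAs (Monoid (PresentedMonoid (ibRel n)))

/-- The canonical projection from the free monoid to `IBₙ`. -/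
def ibWordM (n : ℕ) (w : FreeMonoid (IBGen n)) : InvBraidMonoid n :=
  PresentedMonoid.mk (ibRel n) w

/-- `σ_k` (1-based index) as a word in the free monoid on the generators of
`IBₙ` (the unit on out-of-range indices). -/
def sgw (n k : ℕ) : FreeMonoid (IBGen n) :=
  if h : 1 ≤ k ∧ k ≤ n - 1 then of (IBGen.sig ⟨k - 1, by omega⟩) else 1

/-- `ε_k` (1-based index) as a word in the free monoid on the generators of
`IBₙ`. -/
def epw (n k : ℕ) : FreeMonoid (IBGen n) :=
  if h : 1 ≤ k ∧ k ≤ n then of (IBGen.eps ⟨k - 1, by omega⟩) else 1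

/-- The Garside fundamental word
`Δ = (σ₁⋯σₙ₋₁)(σ₁⋯σₙ₋₂)⋯(σ₁σ₂)σ₁`. -/
def garsideWord (n : ℕ) : FreeMonoid (IBGen n) :=
  ((List.range (n - 1)).map
    (fun k => ((List.range (n - 1 - k)).map (fun j => sgw n (j + 1))).prod)).prod

/-- The Garside fundamental element `Δ` of `IBₙ`. -/
def garsideM (n : ℕ) : InvBraidMonoid n := ibWordM n (garsideWord n)

/-!
Every `σₖ` moves the idempotents by the transposition `(k k+1)` of their indices:
`εⱼ σₖ = σₖ ε_{(k k+1) j}`. Hence any positive braid word `w` satisfies `εⱼ w = w ε_{π(j)}`,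
where `π` composes the transpositions of the letters of `w` from left to right. The prefix
`σ₁⋯σₘ` induces the cycle `1 ↦ m+1, j ↦ j-1`, and composing these cycles along
`Δ = (σ₁⋯σₙ₋₁)⋯(σ₁σ₂)σ₁` gives the reversal `j ↦ n+1-j`.
-/

namespace InvBraidMonoid

variable {n : ℕ}

lemma ibWordM_mul (a b : FreeMonoid (IBGen n)) :
    ibWordM n (a * b) = ibWordM n a * ibWordM n b := rfl

lemma ibWordM_one : ibWordM n 1 = 1 := rfl

lemma ibWordM_eq_of_ibRel {a b : FreeMonoid (IBGen n)} (h : ibRel n a b) :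
    ibWordM n a = ibWordM n b :=
  PresentedMonoid.mk_eq_mk_of_rel h

lemma epw_eq_one {k : ℕ} (hk : ¬(1 ≤ k ∧ k ≤ n)) : epw n k = 1 := dif_neg hk

lemma epw_eq_of (j : Fin n) {k : ℕ} (hk : k = j + 1) : epw n k = of (IBGen.eps j) := by
  subst hk
  rw [epw, dif_pos (by omega)]
  rfl

lemma sgw_fin_succ (i : Fin (n - 1)) : sgw n (i + 1) = of (IBGen.sig i) := by
  rw [sgw, dif_pos (by omega)]
  rfl

/-- `x` carries `εⱼ` across itself to `ε_{f j}`; indices outside `1, …, n` stand for `1`. -/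
def IntertwinesEps (x : InvBraidMonoid n) (f : ℕ → ℕ) : Prop :=
  ∀ j, ibWordM n (epw n j) * x = x * ibWordM n (epw n (f j))

lemma intertwinesEps_one {f : ℕ → ℕ} (hf : ∀ j, f j = j) :
    IntertwinesEps (1 : InvBraidMonoid n) f :=
  fun j => by rw [hf, mul_one, one_mul]

lemma IntertwinesEps.mul {x y : InvBraidMonoid n} {f g : ℕ → ℕ}
    (hx : IntertwinesEps x f) (hy : IntertwinesEps y g) : IntertwinesEps (x * y) (g ∘ f) :=
  fun j => by rw [← mul_assoc, hx j, mul_assoc, hy (f j), mul_assoc]; rfl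

lemma intertwinesEps_sig (i : Fin (n - 1)) :
    IntertwinesEps (ibWordM n (sgw n (i + 1))) (Equiv.swap (i.val + 1) (i.val + 2)) := by
  intro j
  by_cases hj : 1 ≤ j ∧ j ≤ n
  swap
  · rw [Equiv.swap_apply_of_ne_of_ne (by omega) (by omega), epw_eq_one hj, ibWordM_one,
      mul_one, one_mul]
  obtain ⟨j, rfl⟩ : ∃ j' : Fin n, j = j' + 1 := ⟨⟨j - 1, by omega⟩, (Nat.sub_add_cancel hj.1).symm⟩
  rw [sgw_fin_succ, epw_eq_of j rfl, ← ibWordM_mul, ← ibWordM_mul]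
  by_cases h₀ : j.val = i.val
  · obtain rfl : j = ⟨i.val, Nat.lt_of_lt_pred i.isLt⟩ := Fin.ext h₀
    rw [Equiv.swap_apply_left, epw_eq_of ⟨i.val + 1, Nat.add_lt_of_lt_sub i.isLt⟩ rfl]
    exact ibWordM_eq_of_ibRel (ibRel.eps_shift₁ i)
  by_cases h₁ : j.val = i.val + 1
  · obtain rfl : j = ⟨i.val + 1, Nat.add_lt_of_lt_sub i.isLt⟩ := Fin.ext h₁
    rw [Equiv.swap_apply_right, epw_eq_of ⟨i.val, Nat.lt_of_lt_pred i.isLt⟩ rfl]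
    exact ibWordM_eq_of_ibRel (ibRel.eps_shift₂ i)
  rw [Equiv.swap_apply_of_ne_of_ne (by omega) (by omega), epw_eq_of j rfl]
  exact ibWordM_eq_of_ibRel (ibRel.eps_comm j i ⟨h₀, h₁⟩)

/-- The word `σ₁ σ₂ ⋯ σₘ`. -/
def sigmaPrefixWord (n m : ℕ) : FreeMonoid (IBGen n) :=
  ((List.range m).map (fun j => sgw n (j + 1))).prod

lemma sigmaPrefixWord_succ (m : ℕ) :
    sigmaPrefixWord n (m + 1) = sigmaPrefixWord n m * sgw n (m + 1) := by
  rw [sigmaPrefixWord, List.range_succ, List.map_append, List.prod_append, List.map_singleton,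
    List.prod_singleton, sigmaPrefixWord]

def shiftCycle (m j : ℕ) : ℕ := if j = 1 then m + 1 else if j ≤ m + 1 then j - 1 else j

lemma intertwinesEps_sigmaPrefixWord {m : ℕ} (hm : m ≤ n - 1) :
    IntertwinesEps (ibWordM n (sigmaPrefixWord n m)) (shiftCycle m) := by
  induction m with
  | zero =>
    exact intertwinesEps_one fun j => by unfold shiftCycle; split_ifs <;> omega
  | succ m ih =>
    rw [sigmaPrefixWord_succ, ibWordM_mul]
    convert (ih (by omega)).mul (intertwinesEps_sig ⟨m, by omega⟩) using 1
    funext j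
    simp only [Function.comp_apply, shiftCycle, Equiv.swap_apply_def]
    split_ifs <;> omega

/-- The Garside word `(σ₁⋯σₜ)(σ₁⋯σₜ₋₁)⋯(σ₁σ₂)σ₁` of `t+1` strands. -/
def garsidePrefixWord (n t : ℕ) : FreeMonoid (IBGen n) :=
  ((List.range t).map (fun k => sigmaPrefixWord n (t - k))).prod

lemma garsidePrefixWord_succ (t : ℕ) :
    garsidePrefixWord n (t + 1) = sigmaPrefixWord n (t + 1) * garsidePrefixWord n t := by
  rw [garsidePrefixWord, List.range_succ_eq_map, List.map_cons, List.map_map, List.prod_cons]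
  simp [Function.comp_def, garsidePrefixWord]

def reverseUpTo (t j : ℕ) : ℕ := if 1 ≤ j ∧ j ≤ t + 1 then t + 2 - j else j

lemma intertwinesEps_garsidePrefixWord {t : ℕ} (ht : t ≤ n - 1) :
    IntertwinesEps (ibWordM n (garsidePrefixWord n t)) (reverseUpTo t) := by
  induction t with
  | zero =>
    exact intertwinesEps_one fun j => by unfold reverseUpTo; split_ifs <;> omega
  | succ t ih =>
    rw [garsidePrefixWord_succ, ibWordM_mul]
    convert (intertwinesEps_sigmaPrefixWord ht).mul (ih (by omega)) using 1
    funext j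
    simp only [Function.comp_apply, shiftCycle, reverseUpTo]
    split_ifs <;> omega

lemma garsideWord_eq : garsideWord n = garsidePrefixWord n (n - 1) := rfl

end InvBraidMonoid

theorem eps_garside_commutation (n : ℕ) (i : ℕ) (h₁ : 1 ≤ i) (h₂ : i ≤ n) :
    ibWordM n (epw n i) * garsideM n =
      garsideM n * ibWordM n (epw n (n + 1 - i)) := by
  have hrev : InvBraidMonoid.reverseUpTo (n - 1) i = n + 1 - i := by
    unfold InvBraidMonoid.reverseUpTo
    split_ifs <;> omega
  rw [garsideM, InvBraidMonoid.garsideWord_eq,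
    InvBraidMonoid.intertwinesEps_garsidePrefixWord le_rfl i, hrev]
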